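/- arXiv:2511.15372 — 5 statements merged into one kernel-verified Lean document; each statement's English description precedes it below -/
import Mathlib

section
/- Let q be a prime power, k ≥ 2, and let α₁, …, α_{k-1} ∈ L be R-independent. Then the set S = {K·x : x ∈ α_i·(R∖{0}) for some i = 1, …, k-1} of points of PG(k-1, q^{k-1}) is a strong blocking set: every (k-1)-dimensional K-subspace of L equals the K-linear span of the union of the points of S it contains. -/
/-!
Fix a hyperplane `W`. Since `|F| = q^k` exceeds `|L/W| = q^(k-1)`, for every `i` two elements of
`αᵢ F` have the same image in `L/W`, so `αᵢ yᵢ ∈ W` for some `yᵢ ∈ F*`. A `K`-linear relation among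
the `αᵢ yᵢ` is a relation among the `αᵢ` with coefficients in `R = K F`, so these `k - 1` points of
`S` are independent and span `W`.
-/

open Module Submodule

theorem Module.finrank_eq_of_natCard_eq_pow {K V : Type*} [Field K] [Finite K] [AddCommGroup V]
    [Module K V] [Finite V] {n : ℕ} (h : Nat.card V = Nat.card K ^ n) : finrank K V = n :=
  Nat.pow_right_injective (Finite.one_lt_card (α := K)) (natCard_eq_pow_finrank.symm.trans h)

theorem Submodule.natCard_quotient_eq_pow {K V : Type*} [Field K] [Finite K] [AddCommGroup V]
    [Module K V] [Finite V] (W : Submodule K V) :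
    Nat.card (V ⧸ W) = Nat.card K ^ (finrank K V - finrank K W) := by
  rw [natCard_eq_pow_finrank (K := K), finrank_quotient]

theorem exists_ne_zero_mul_mem_of_card_quotient_lt {L : Type*} [Ring L] {W F : AddSubgroup L}
    [Finite (L ⧸ W)] (hcard : Nat.card (L ⧸ W) < Nat.card F) (a : L) :
    ∃ y ∈ F, y ≠ 0 ∧ a * y ∈ W := by
  let f : F →+ L ⧸ W := (QuotientAddGroup.mk' W).comp ((AddMonoidHom.mulLeft a).comp F.subtype)
  have hf : ¬ Function.Injective f := fun hf => (Nat.card_le_card_of_injective f hf).not_gt hcard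
  obtain ⟨y, hy, hy0⟩ : ∃ y, f y = 0 ∧ y ≠ 0 := by simpa [injective_iff_map_eq_zero] using hf
  exact ⟨y, y.2, by simpa using hy0, (QuotientAddGroup.eq_zero_iff _).mp hy⟩

def IsIndependentOver {L ι : Type*} [Semiring L] [Fintype ι] (R : Set L) (α : ι → L) : Prop :=
  ∀ ρ : ι → L, (∀ i, ρ i ∈ R) → ∑ i, ρ i * α i = 0 → ∀ i, ρ i = 0

theorem IsIndependentOver.linearIndependent_mul {L ι : Type*} [Field L] [Fintype ι] {R : Set L}
    {α : ι → L} (hα : IsIndependentOver R α) (K : Subfield L) {y : ι → L} (hy : ∀ i, y i ≠ 0)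
    (hKy : ∀ (c : K) i, c * y i ∈ R) : LinearIndependent K fun i => α i * y i := by
  rw [Fintype.linearIndependent_iff]
  intro c hc i
  have hrel : ∑ i, (c i * y i) * α i = 0 := by
    rw [← hc]
    exact Finset.sum_congr rfl fun i _ => by rw [Subfield.smul_def]; ring
  exact Subtype.ext <| (mul_eq_zero.mp (hα _ (fun i => hKy (c i) i) hrel i)).resolve_right (hy i)

theorem LinearIndependent.span_range_eq_of_card_eq_finrank {K V ι : Type*} [DivisionRing K]
    [AddCommGroup V] [Module K V] [Fintype ι] {v : ι → V} (hv : LinearIndependent K v)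
    {W : Submodule K V} [FiniteDimensional K W] (hvW : ∀ i, v i ∈ W)
    (hcard : Fintype.card ι = finrank K W) : span K (Set.range v) = W :=
  eq_of_le_of_finrank_eq (span_le.mpr <| Set.range_subset_iff.mpr hvW)
    (by rw [finrank_span_eq_card hv, hcard])

theorem Submodule.eq_span_iUnion_of_span_range_eq {K V ι : Type*} [Semiring K] [AddCommMonoid V]
    [Module K V] {S : Set (Submodule K V)} {W : Submodule K V} {v : ι → V}
    (hvS : ∀ i, span K {v i} ∈ S) (hW : span K (Set.range v) = W) :
    W = span K (⋃ P ∈ {P ∈ S | P ≤ W}, (P : Set V)) := by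
  subst hW
  refine le_antisymm ?_ (span_le.mpr <| Set.iUnion₂_subset fun P hP => hP.2)
  rw [span_le, Set.range_subset_iff]
  intro i
  have hviW : v i ∈ span K (Set.range v) := subset_span (Set.mem_range_self i)
  exact subset_span <| Set.mem_biUnion ⟨hvS i, (span_singleton_le_iff_mem _ _).mpr hviW⟩
    (mem_span_singleton_self (v i))

theorem R_independent_implies_strong_blocking_general
    (q k : ℕ)
    (L : Type) [Field L] [Finite L] (hL : Nat.card L = q ^ (k * (k - 1)))
    (K F : Subfield L) (hK : Nat.card K = q ^ (k - 1)) (hF : Nat.card F = q ^ k)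
    (R : Set L) (hR : R = {z | ∃ x ∈ K, ∃ y ∈ F, z = x * y})
    (α : Fin (k - 1) → L)
    (hindep : ∀ ρ : Fin (k - 1) → L, (∀ i, ρ i ∈ R) →
      ∑ i, ρ i * α i = 0 → ∀ i, ρ i = 0)
    (S : Set (Submodule ↥K L))
    (hS : S = {P | ∃ (i : Fin (k - 1)) (ρ : L), ρ ∈ R ∧ ρ ≠ 0 ∧
      P = Submodule.span ↥K {α i * ρ}}) :
    ∀ W : Submodule ↥K L, Module.finrank ↥K ↥W = k - 1 →
      W = Submodule.span ↥K (⋃ P ∈ {P ∈ S | P ≤ W}, (P : Set L)) := by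
  intro W hW
  subst hR hS
  have hfin : finrank K L = k :=
    finrank_eq_of_natCard_eq_pow (by rw [hL, hK, ← pow_mul, mul_comm])
  have hKq : 1 < q ^ (k - 1) := hK ▸ Finite.one_lt_card
  have hk : k - 1 ≠ 0 := by rintro hk; simp [hk] at hKq
  have hquot : Nat.card (L ⧸ W) < Nat.card F := by
    rw [natCard_quotient_eq_pow, hfin, hW, hK, hF, Nat.sub_sub_self (by omega), pow_one]
    exact Nat.pow_lt_pow_right ((one_lt_pow_iff hk).mp hKq) (by omega)
  choose y hyF hy0 hyW using fun i =>
    exists_ne_zero_mul_mem_of_card_quotient_lt (W := W.toAddSubgroup) (F := F.toAddSubgroup)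
      hquot (α i)
  have hli : LinearIndependent K fun i => α i * y i :=
    IsIndependentOver.linearIndependent_mul hindep K hy0 fun c i => ⟨c, c.2, y i, hyF i, rfl⟩
  refine eq_span_iUnion_of_span_range_eq (fun i => ⟨i, y i, ?_, hy0 i, rfl⟩)
    (hli.span_range_eq_of_card_eq_finrank hyW (by rw [hW, Fintype.card_fin]))
  exact ⟨1, K.one_mem, y i, hyF i, (one_mul _).symm⟩

/-- Let `q` be a prime power, `k ≥ 2`, `L` the finite field with `q^{k(k-1)}` elements,
`K` its subfield with `q^{k-1}` elements and `F` its subfield with `q^k` elements, and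
`R = {x·y : x ∈ K, y ∈ F}`.  If `α₁, …, α_{k-1} ∈ L` are `R`-independent, then the set
`S = {K·x : x ∈ αᵢ·R*, 1 ≤ i ≤ k-1}` of points of `PG(k-1, q^{k-1})` (the projective space
of `L` viewed as a `K`-vector space of dimension `k`) is a strong blocking set: every
hyperplane (a `(k-1)`-dimensional `K`-subspace of `L`) equals the `K`-linear span of the
union of the points of `S` it contains. -/
theorem R_independent_implies_strong_blocking
    (p h q k : ℕ) (hp : p.Prime) (hh : 1 ≤ h) (hq : q = p ^ h) (hk : 2 ≤ k)
    (L : Type) [Field L] [Finite L] (hL : Nat.card L = q ^ (k * (k - 1)))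
    (K F : Subfield L) (hK : Nat.card K = q ^ (k - 1)) (hF : Nat.card F = q ^ k)
    (R : Set L) (hR : R = {z | ∃ x ∈ K, ∃ y ∈ F, z = x * y})
    (α : Fin (k - 1) → L)
    (hindep : ∀ ρ : Fin (k - 1) → L, (∀ i, ρ i ∈ R) →
      ∑ i, ρ i * α i = 0 → ∀ i, ρ i = 0)
    (S : Set (Submodule ↥K L))
    (hS : S = {P | ∃ (i : Fin (k - 1)) (ρ : L), ρ ∈ R ∧ ρ ≠ 0 ∧
      P = Submodule.span ↥K {α i * ρ}}) :
    ∀ W : Submodule ↥K L, Module.finrank ↥K ↥W = k - 1 →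
      W = Submodule.span ↥K (⋃ P ∈ {P ∈ S | P ≤ W}, (P : Set L)) :=
  R_independent_implies_strong_blocking_general q k L hL K F hK hF R hR α hindep S hS
end

section
/- Let q be a prime power and k ≥ 2. Let v, w ∈ R^{k-1} be nonzero vectors with the same Hamming weight (i.e., the same number of nonzero coordinates). Then there exists an L-linear automorphism f of L^{k-1} such that f maps R^{k-1} bijectively onto R^{k-1} and f(v) = w. In particular, the setwise stabiliser of B(k,q) in PGL(k-1, q^{k(k-1)}) acts transitively on the points of B(k,q) of fixed weight. -/
/-!
`R ∖ {0}` is the product `K^× F^×` of two subgroups of `L^×`, so `R` contains `1` and is closed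
under products and inverses. A monomial map `u ↦ (c i * u (σ⁻¹ i))ᵢ` with all `c i ∈ R ∖ {0}`
therefore maps `R^{k-1}` onto itself. Vectors of equal weight are matched by such a map: `σ`
sends the support of `v` onto that of `w`, and `c (σ i) = w (σ i) / v i` there.
-/

theorem Equiv.Perm.exists_iff_of_card_eq {ι : Type*} [Finite ι] {p q : ι → Prop}
    (h : Nat.card {i // p i} = Nat.card {i // q i}) : ∃ σ : Equiv.Perm ι, ∀ i, q (σ i) ↔ p i := by
  classical
  obtain ⟨e⟩ := Finite.card_eq.mp h
  exact ⟨e.extendSubtype, fun i =>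
    ⟨fun hq => by_contra fun hp => e.extendSubtype_not_mem i hp hq, e.extendSubtype_mem i⟩⟩

section Monomial

variable {ι L : Type*} [Field L]

def monomialEquiv (σ : Equiv.Perm ι) (c : ι → Lˣ) : (ι → L) ≃ₗ[L] (ι → L) :=
  (LinearEquiv.funCongrLeft L L σ.symm).trans
    (LinearEquiv.piCongrRight fun i => LinearEquiv.smulOfUnit (c i))

@[simp]
theorem monomialEquiv_apply (σ : Equiv.Perm ι) (c : ι → Lˣ) (u : ι → L) (i : ι) :
    monomialEquiv σ c u i = c i * u (σ.symm i) :=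
  rfl

theorem monomialEquiv_mem_pi_iff {S : Submonoid L} (hS : ∀ x ∈ S, x⁻¹ ∈ S)
    {σ : Equiv.Perm ι} {c : ι → Lˣ} (hc : ∀ i, (c i : L) ∈ S) {u : ι → L} :
    (∀ i, monomialEquiv σ c u i ∈ S) ↔ ∀ i, u i ∈ S := by
  have hmul (i) : (c i : L) * u (σ.symm i) ∈ S ↔ u (σ.symm i) ∈ S :=
    ⟨fun h => by simpa using S.mul_mem (hS _ (hc i)) h, S.mul_mem (hc i)⟩
  simp only [monomialEquiv_apply, hmul]
  exact (σ.forall_congr_left (p := fun i => u i ∈ S)).symm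

theorem monomialEquiv_image_pi {S : Submonoid L} (hS : ∀ x ∈ S, x⁻¹ ∈ S)
    {σ : Equiv.Perm ι} {c : ι → Lˣ} (hc : ∀ i, (c i : L) ∈ S) :
    monomialEquiv σ c '' {u | ∀ i, u i ∈ S} = {u | ∀ i, u i ∈ S} := by
  set A := {u : ι → L | ∀ i, u i ∈ S}
  have hA : monomialEquiv σ c ⁻¹' A = A := Set.ext fun _ => monomialEquiv_mem_pi_iff hS hc
  rw [← hA, Set.image_preimage_eq _ (monomialEquiv σ c).surjective, hA]

end Monomial

theorem exists_monomialEquiv_apply_eq_of_card_support_eq {ι L : Type*} [Finite ι] [Field L]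
    {S : Submonoid L} (hS : ∀ x ∈ S, x⁻¹ ∈ S) {v w : ι → L} (hv : ∀ i, v i ∈ S)
    (hw : ∀ i, w i ∈ S) (hwt : Nat.card {i // v i ≠ 0} = Nat.card {i // w i ≠ 0}) :
    ∃ σ : Equiv.Perm ι, ∃ c : ι → Lˣ, (∀ i, (c i : L) ∈ S) ∧ monomialEquiv σ c v = w := by
  classical
  obtain ⟨σ, hσ⟩ := Equiv.Perm.exists_iff_of_card_eq hwt
  have hσ0 (i) : w i = 0 ↔ v (σ.symm i) = 0 := by simpa using not_iff_not.mp (hσ (σ.symm i))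
  -- on the support of `v` the scalar is forced; off it, any element of `S` would do
  let c (i : ι) : Lˣ :=
    if hi : v (σ.symm i) = 0 then 1 else Units.mk0 (w i / v (σ.symm i)) (by simp [hi, hσ0])
  refine ⟨σ, c, fun i => ?_, funext fun i => ?_⟩
  · by_cases hi : v (σ.symm i) = 0
    · simp [c, hi]
    · simpa [c, hi, div_eq_mul_inv] using S.mul_mem (hw i) (hS _ (hv _))
  · by_cases hi : v (σ.symm i) = 0
    · simp [c, hi, (hσ0 i).mpr hi]
    · simp [c, hi]

namespace Subfield

variable {L : Type*} [Field L] (K F : Subfield L)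

theorem coe_toSubmonoid_sup :
    ((K.toSubmonoid ⊔ F.toSubmonoid : Submonoid L) : Set L) =
      {z | ∃ x ∈ K, ∃ y ∈ F, z = x * y} := by
  ext z
  simp only [SetLike.mem_coe, Submonoid.mem_sup, Set.mem_ofPred_eq, eq_comm]
  rfl

theorem inv_mem_toSubmonoid_sup :
    ∀ z ∈ K.toSubmonoid ⊔ F.toSubmonoid, z⁻¹ ∈ K.toSubmonoid ⊔ F.toSubmonoid := by
  intro z hz
  obtain ⟨x, hx, y, hy, rfl⟩ := Submonoid.mem_sup.mp hz
  exact Submonoid.mem_sup.mpr ⟨x⁻¹, K.inv_mem hx, y⁻¹, F.inv_mem hy, (mul_inv x y).symm⟩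

end Subfield

theorem stabiliser_transitive_on_fixed_weight_general
    (k : ℕ)
    (L : Type) [Field L]
    (K F : Subfield L)
    (R : Set L) (hR : R = {z | ∃ x ∈ K, ∃ y ∈ F, z = x * y})
    (v w : Fin (k - 1) → L)
    (hv : ∀ i, v i ∈ R) (hw : ∀ i, w i ∈ R)
    (hwt : Nat.card {i | v i ≠ 0} = Nat.card {i | w i ≠ 0}) :
    ∃ f : (Fin (k - 1) → L) ≃ₗ[L] (Fin (k - 1) → L),
      (⇑f '' {u | ∀ i, u i ∈ R} = {u | ∀ i, u i ∈ R}) ∧ f v = w := by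
  rw [← Subfield.coe_toSubmonoid_sup] at hR
  subst hR
  have hS := Subfield.inv_mem_toSubmonoid_sup K F
  obtain ⟨σ, c, hc, hvw⟩ := exists_monomialEquiv_apply_eq_of_card_support_eq hS hv hw hwt
  exact ⟨monomialEquiv σ c, monomialEquiv_image_pi hS hc, hvw⟩

/-- Let `q` be a prime power and `k ≥ 2`, `L` the finite field with `q^{k(k-1)}` elements,
`K` its subfield with `q^{k-1}` elements and `F` its subfield with `q^k` elements, and
`R = {x·y : x ∈ K, y ∈ F}`.  If `v, w ∈ R^{k-1}` are nonzero vectors with the same Hamming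
weight, then there is an `L`-linear automorphism `f` of `L^{k-1}` mapping `R^{k-1}`
bijectively onto itself with `f v = w`.  (In particular, the setwise stabiliser of `B(k,q)`
in `PGL(k-1, q^{k(k-1)})` acts transitively on points of `B(k,q)` of fixed weight.) -/
theorem stabiliser_transitive_on_fixed_weight
    (p h q k : ℕ) (hp : p.Prime) (hh : 1 ≤ h) (hq : q = p ^ h) (hk : 2 ≤ k)
    (L : Type) [Field L] [Finite L] (hL : Nat.card L = q ^ (k * (k - 1)))
    (K F : Subfield L) (hK : Nat.card K = q ^ (k - 1)) (hF : Nat.card F = q ^ k)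
    (R : Set L) (hR : R = {z | ∃ x ∈ K, ∃ y ∈ F, z = x * y})
    (v w : Fin (k - 1) → L) (hv0 : v ≠ 0) (hw0 : w ≠ 0)
    (hv : ∀ i, v i ∈ R) (hw : ∀ i, w i ∈ R)
    (hwt : Nat.card {i | v i ≠ 0} = Nat.card {i | w i ≠ 0}) :
    ∃ f : (Fin (k - 1) → L) ≃ₗ[L] (Fin (k - 1) → L),
      (⇑f '' {u | ∀ i, u i ∈ R} = {u | ∀ i, u i ∈ R}) ∧ f v = w :=
  stabiliser_transitive_on_fixed_weight_general k L K F R hR v w hv hw hwt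
end

section
/- Let q be a prime power and k ≥ 3, and let P be a point of B(k,q) spanned by a vector of Hamming weight 1. Then every 2-dimensional L-subspace of L^{k-1} containing P contains either exactly one point of B(k,q) (namely P itself) or exactly r + 2 points of B(k,q), and the number of 2-dimensional L-subspaces containing P and at least two points of B(k,q) equals ((r+1)^{k-2} - 1)/r. -/
/-!
`R ∖ {0} = K^* F^*` is a subgroup of `L^*`, and `P = ⟨e⟩` for a coordinate vector `e = e_{i₀}`.
A line through `⟨e⟩` carrying a second point `⟨u⟩` of `B` is spanned by `e` and the
`R`-vector `w = u - u_{i₀} e`, which vanishes at `i₀`; conversely, on such a line `⟨e, w⟩` the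
points of `B` are `⟨e⟩` and the `⟨w + γ e⟩` with `γ ∈ R`, since a vector `a e + b w` with
coordinates in `R` forces `b ∈ R`. Two such `w, w'` span the same line with `e` iff `w = c w'`
with `c ∈ R ∖ {0}`, so the secant lines through `⟨e⟩` number `((r + 1)^{k-2} - 1) / r`.
-/

open Submodule

section

variable {L : Type*} [Field L] {ι : Type*}

structure IsSubgroupWithZero (R : Set L) : Prop where
  zero_mem : (0 : L) ∈ R
  one_mem : (1 : L) ∈ R
  mul_mem {a b : L} : a ∈ R → b ∈ R → a * b ∈ R
  inv_mem {a : L} : a ∈ R → a⁻¹ ∈ R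

theorem isSubgroupWithZero_setOf_mul_subfield (K F : Subfield L) :
    IsSubgroupWithZero {z : L | ∃ x ∈ K, ∃ y ∈ F, z = x * y} where
  zero_mem := ⟨0, K.zero_mem, 0, F.zero_mem, (mul_zero 0).symm⟩
  one_mem := ⟨1, K.one_mem, 1, F.one_mem, (mul_one 1).symm⟩
  mul_mem := by
    rintro _ _ ⟨x, hx, y, hy, rfl⟩ ⟨x', hx', y', hy', rfl⟩
    exact ⟨x * x', K.mul_mem hx hx', y * y', F.mul_mem hy hy', mul_mul_mul_comm x y x' y'⟩
  inv_mem := by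
    rintro _ ⟨x, hx, y, hy, rfl⟩
    exact ⟨x⁻¹, K.inv_mem hx, y⁻¹, F.inv_mem hy, mul_inv x y⟩

namespace IsSubgroupWithZero

variable {R : Set L}

theorem mem_of_mul_mem (hR : IsSubgroupWithZero R) {a b : L} (ha : a ∈ R) (ha0 : a ≠ 0)
    (hab : a * b ∈ R) : b ∈ R := by
  simpa [inv_mul_cancel_left₀ ha0] using hR.mul_mem (hR.inv_mem ha) hab

theorem mem_of_smul_mem (hR : IsSubgroupWithZero R) {y : ι → L} {b : L} (hy : ∀ i, y i ∈ R)
    (hy0 : y ≠ 0) (hby : ∀ i, (b • y) i ∈ R) : b ∈ R := by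
  obtain ⟨j, hj⟩ := Function.ne_iff.mp hy0
  exact hR.mem_of_mul_mem (hy j) hj (by simpa [mul_comm] using hby j)

end IsSubgroupWithZero

theorem eq_smul_single_of_card_support_eq_one [DecidableEq ι] {v : ι → L}
    (hv : Nat.card {i | v i ≠ 0} = 1) :
    ∃ i₀, v i₀ ≠ 0 ∧ v = v i₀ • Pi.single i₀ 1 := by
  obtain ⟨⟨i₀, hi₀⟩, huniq⟩ := Nat.card_eq_one_iff_exists.mp hv
  refine ⟨i₀, hi₀, funext fun i => ?_⟩
  rcases eq_or_ne i i₀ with rfl | hi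
  · simp
  · have : ¬ v i ≠ 0 := fun h => hi (congrArg Subtype.val (huniq ⟨i, h⟩))
    simp_all

theorem Set.ncard_image_mul_of_ncard_fiber_eq {α β : Type*} {f : α → β} {s : Set α}
    (hs : s.Finite) {n : ℕ} (hn : ∀ a ∈ s, {x ∈ s | f x = f a}.ncard = n) :
    (f '' s).ncard * n = s.ncard := by
  classical
  obtain ⟨t, rfl⟩ := hs.exists_finset_coe
  have hfiber : ∀ b ∈ t.image f, (t.filter (f · = b)).card = n := by
    intro b hb
    obtain ⟨a, ha, rfl⟩ := Finset.mem_image.mp hb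
    rw [← hn a ha, ← Set.ncard_coe_finset, Finset.coe_filter]
    rfl
  rw [← Finset.coe_image, Set.ncard_coe_finset, Set.ncard_coe_finset,
    Finset.card_eq_sum_card_image f t, Finset.sum_congr rfl hfiber, Finset.sum_const,
    smul_eq_mul]

-- `B(k,q)` is `pointsOver R (Fin (k - 1))`.
def pointsOver (R : Set L) (ι : Type*) : Set (Submodule L (ι → L)) :=
  {P | ∃ u : ι → L, u ≠ 0 ∧ (∀ i, u i ∈ R) ∧ P = span L {u}}

def hyperplaneVectorsOver (R : Set L) (i₀ : ι) : Set (ι → L) :=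
  {w | (∀ i, w i ∈ R) ∧ w i₀ = 0 ∧ w ≠ 0}

theorem exists_ne_zero_of_mem_hyperplaneVectorsOver {R : Set L} {i₀ : ι} {w : ι → L}
    (hw : w ∈ hyperplaneVectorsOver R i₀) : ∃ j, j ≠ i₀ ∧ w j ≠ 0 := by
  obtain ⟨j, hj⟩ := Function.ne_iff.mp hw.2.2
  exact ⟨j, fun h => hj (h ▸ hw.2.1), hj⟩

section coordinatePoint

variable [DecidableEq ι] {R : Set L} {i₀ : ι}

theorem update_mem_of_forall_mem {α : Type*} {S : Set α} {u : ι → α} {c : α}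
    (hu : ∀ i, u i ∈ S) (hc : c ∈ S) (i : ι) : Function.update u i₀ c i ∈ S := by
  rw [Function.update_apply]
  split_ifs
  exacts [hc, hu i]

theorem smul_single_add_eq_update {w : ι → L} (hw : w i₀ = 0) (a : L) :
    a • Pi.single i₀ 1 + w = Function.update w i₀ a := by
  ext i
  rcases eq_or_ne i i₀ with rfl | hi <;> simp [*]

variable (i₀) in
theorem smul_single_add_update_zero (u : ι → L) :
    u i₀ • Pi.single i₀ 1 + Function.update u i₀ 0 = u := by
  rw [smul_single_add_eq_update (Function.update_self i₀ 0 u), Function.update_idem,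
    Function.update_eq_self]

variable (i₀) in
theorem span_single_mem_pointsOver (hR : IsSubgroupWithZero R) :
    span L {Pi.single i₀ 1} ∈ pointsOver R ι := by
  refine ⟨Pi.single i₀ 1, by simp, fun i => ?_, rfl⟩
  rw [Pi.single_apply]
  split_ifs
  exacts [hR.one_mem, hR.zero_mem]

theorem span_update_mem_pointsOver {w : ι → L} (hw : w ∈ hyperplaneVectorsOver R i₀) {γ : L}
    (hγ : γ ∈ R) : span L {Function.update w i₀ γ} ∈ pointsOver R ι := by
  obtain ⟨j, hji₀, hj⟩ := exists_ne_zero_of_mem_hyperplaneVectorsOver hw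
  refine ⟨_, Function.ne_iff.mpr ⟨j, by simpa [hji₀] using hj⟩,
    update_mem_of_forall_mem hw.1 hγ, rfl⟩

theorem setOf_pointsOver_le_span_pair (hR : IsSubgroupWithZero R) {w : ι → L}
    (hw : w ∈ hyperplaneVectorsOver R i₀) :
    {Q ∈ pointsOver R ι | Q ≤ span L {Pi.single i₀ 1, w}} =
      insert (span L {Pi.single i₀ 1}) ((fun γ => span L {Function.update w i₀ γ}) '' R) := by
  ext Q
  constructor
  · rintro ⟨⟨u, hu0, huR, rfl⟩, hle⟩
    obtain ⟨a, b, rfl⟩ := mem_span_pair.mp (hle (mem_span_singleton_self _))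
    rcases eq_or_ne b 0 with rfl | hb
    · have ha : a ≠ 0 := by rintro rfl; simp at hu0
      left
      rw [zero_smul, add_zero, span_singleton_smul_eq ha.isUnit]
    · right
      have hbw0 : (b • w) i₀ = 0 := by simp [hw.2.1]
      rw [smul_single_add_eq_update hbw0] at huR
      have hbR : b ∈ R := hR.mem_of_smul_mem hw.1 hw.2.2 fun i => by
        rcases eq_or_ne i i₀ with rfl | hi
        · simpa [hbw0] using hR.zero_mem
        · simpa [hi] using huR i
      refine ⟨b⁻¹ * a, hR.mul_mem (hR.inv_mem hbR) (by simpa using huR i₀), ?_⟩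
      have hnormalize :
          b⁻¹ • (a • Pi.single i₀ 1 + b • w) = Function.update w i₀ (b⁻¹ * a) := by
        rw [← smul_single_add_eq_update hw.2.1, smul_add, smul_smul, smul_smul,
          inv_mul_cancel₀ hb, one_smul]
      dsimp only
      rw [← hnormalize, span_singleton_smul_eq (inv_ne_zero hb).isUnit]
  · rintro (rfl | ⟨γ, hγ, rfl⟩)
    · exact ⟨span_single_mem_pointsOver i₀ hR, span_mono (by simp)⟩
    · refine ⟨span_update_mem_pointsOver hw hγ, ?_⟩
      rw [span_singleton_le_iff_mem, ← smul_single_add_eq_update hw.2.1]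
      exact mem_span_pair.mpr ⟨γ, 1, by rw [one_smul]⟩

theorem ncard_setOf_pointsOver_le_span_pair [Finite L] (hR : IsSubgroupWithZero R)
    {w : ι → L} (hw : w ∈ hyperplaneVectorsOver R i₀) :
    {Q ∈ pointsOver R ι | Q ≤ span L {Pi.single i₀ 1, w}}.ncard = R.ncard + 1 := by
  obtain ⟨j, hji₀, hj⟩ := exists_ne_zero_of_mem_hyperplaneVectorsOver hw
  have hnotMem :
      span L {Pi.single i₀ 1} ∉ (fun γ => span L {Function.update w i₀ γ}) '' R := by
    rintro ⟨γ, -, hγ⟩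
    obtain ⟨c, hc⟩ := span_singleton_eq_span_singleton.mp hγ
    simpa [Units.smul_def, hji₀, hj] using congrFun hc j
  have hinj : Set.InjOn (fun γ => span L {Function.update w i₀ γ}) R := by
    intro γ _ γ' _ hγγ'
    obtain ⟨c, hc⟩ := span_singleton_eq_span_singleton.mp hγγ'
    have hc1 : (c : L) = 1 := by
      simpa [Units.smul_def, hji₀, hj] using congrFun hc j
    simpa [Units.smul_def, hc1] using congrFun hc i₀
  rw [setOf_pointsOver_le_span_pair hR hw, Set.ncard_insert_of_notMem hnotMem,
    hinj.ncard_image]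

theorem finrank_span_single_pair {w : ι → L} (hw₀ : w i₀ = 0) (hw : w ≠ 0) :
    Module.finrank L (span L {Pi.single i₀ 1, w}) = 2 := by
  have hli : LinearIndependent L ![Pi.single i₀ 1, w] := by
    rw [LinearIndependent.pair_iff]
    intro s t hst
    obtain rfl : s = 0 := by simpa [hw₀] using congrFun hst i₀
    simpa [hw] using hst
  rw [← Matrix.range_cons_cons_empty, finrank_span_eq_card hli, Fintype.card_fin]

theorem exists_eq_span_pair_of_finrank_eq_two (hR : IsSubgroupWithZero R)
    {W : Submodule L (ι → L)} (hW : Module.finrank L W = 2) (heW : Pi.single i₀ 1 ∈ W)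
    {Q : Submodule L (ι → L)} (hQ : Q ∈ pointsOver R ι) (hQW : Q ≤ W)
    (hQe : Q ≠ span L {Pi.single i₀ 1}) :
    ∃ w ∈ hyperplaneVectorsOver R i₀, W = span L {Pi.single i₀ 1, w} := by
  obtain ⟨u, hu0, huR, rfl⟩ := hQ
  have hw₀ : Function.update u i₀ 0 i₀ = 0 := Function.update_self ..
  have hw0 : Function.update u i₀ 0 ≠ 0 := by
    intro h
    have hu : u = u i₀ • Pi.single i₀ 1 := by
      simpa [h] using (smul_single_add_update_zero i₀ u).symm
    have hui₀ : u i₀ ≠ 0 := fun h0 => hu0 (by simpa [h0] using hu)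
    exact hQe (by rw [hu, span_singleton_smul_eq hui₀.isUnit])
  refine ⟨_, ⟨update_mem_of_forall_mem huR hR.zero_mem, hw₀, hw0⟩, ?_⟩
  have hle : span L {Pi.single i₀ 1, Function.update u i₀ 0} ≤ W := by
    rw [span_le, Set.insert_subset_iff, Set.singleton_subset_iff]
    refine ⟨heW, ?_⟩
    rw [eq_sub_of_add_eq' (smul_single_add_update_zero i₀ u)]
    exact W.sub_mem (hQW (mem_span_singleton_self u)) (W.smul_mem _ heW)
  have : FiniteDimensional L W := .of_finrank_pos (by omega)
  exact (eq_of_le_of_finrank_eq hle (by rw [finrank_span_single_pair hw₀ hw0, hW])).symm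

theorem setOf_pointsOver_le_eq_singleton_or_exists_eq_span_pair (hR : IsSubgroupWithZero R)
    {W : Submodule L (ι → L)} (hW : Module.finrank L W = 2)
    (heW : span L {Pi.single i₀ 1} ≤ W) :
    {Q ∈ pointsOver R ι | Q ≤ W} = {span L {Pi.single i₀ 1}} ∨
      ∃ w ∈ hyperplaneVectorsOver R i₀, W = span L {Pi.single i₀ 1, w} := by
  by_cases h : ∃ Q ∈ pointsOver R ι, Q ≤ W ∧ Q ≠ span L {Pi.single i₀ 1}
  · obtain ⟨Q, hQ, hQW, hQe⟩ := h
    exact .inr (exists_eq_span_pair_of_finrank_eq_two hR hW (heW (mem_span_singleton_self _))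
      hQ hQW hQe)
  · push Not at h
    exact .inl (Set.eq_singleton_iff_unique_mem.mpr
      ⟨⟨span_single_mem_pointsOver i₀ hR, heW⟩, fun Q ⟨hQ, hQW⟩ => h Q hQ hQW⟩)

variable (i₀) in
theorem setOf_secant_eq_image_span_pair [Finite L] (hR : IsSubgroupWithZero R) :
    {W : Submodule L (ι → L) | Module.finrank L W = 2 ∧ span L {Pi.single i₀ 1} ≤ W ∧
        2 ≤ Nat.card {Q ∈ pointsOver R ι | Q ≤ W}} =
      (fun w => span L {Pi.single i₀ 1, w}) '' hyperplaneVectorsOver R i₀ := by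
  ext W
  constructor
  · rintro ⟨hW, heW, htwo⟩
    obtain h | ⟨w, hw, rfl⟩ := setOf_pointsOver_le_eq_singleton_or_exists_eq_span_pair hR hW heW
    · simp [h] at htwo
    · exact ⟨w, hw, rfl⟩
  · rintro ⟨w, hw, rfl⟩
    have hR₁ : 1 ≤ R.ncard := (Set.ncard_pos (Set.toFinite R)).mpr ⟨0, hR.zero_mem⟩
    refine ⟨finrank_span_single_pair hw.2.1 hw.2.2, span_mono (by simp), ?_⟩
    rw [Nat.card_coe_set_eq, ncard_setOf_pointsOver_le_span_pair hR hw]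
    omega

theorem setOf_span_pair_eq_eq_image_smul (hR : IsSubgroupWithZero R) {w₀ : ι → L}
    (hw₀ : w₀ ∈ hyperplaneVectorsOver R i₀) :
    {w ∈ hyperplaneVectorsOver R i₀ |
        span L {Pi.single i₀ 1, w} = span L {Pi.single i₀ 1, w₀}} =
      (· • w₀) '' (R \ {0}) := by
  ext w
  constructor
  · rintro ⟨hw, hspan⟩
    have hmem : w ∈ span L {Pi.single i₀ 1, w₀} := hspan ▸ subset_span (by simp)
    obtain ⟨a, b, hab⟩ := mem_span_pair.mp hmem
    obtain rfl : a = 0 := by simpa [hw₀.2.1, hw.2.1] using congrFun hab i₀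
    rw [zero_smul, zero_add] at hab
    subst hab
    have hb0 : b ≠ 0 := left_ne_zero_of_smul hw.2.2
    exact ⟨b, ⟨hR.mem_of_smul_mem hw₀.1 hw₀.2.2 hw.1, hb0⟩, rfl⟩
  · rintro ⟨c, ⟨hcR, hc0⟩, rfl⟩
    have hc0 : c ≠ 0 := hc0
    refine ⟨⟨fun i => hR.mul_mem hcR (hw₀.1 i), by simp [hw₀.2.1],
      smul_ne_zero hc0 hw₀.2.2⟩,
      ?_⟩
    rw [span_insert, span_insert, span_singleton_smul_eq hc0.isUnit]

variable (i₀) in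
theorem ncard_hyperplaneVectorsOver [Fintype ι] [Finite L] (hR : IsSubgroupWithZero R) :
    (hyperplaneVectorsOver R i₀).ncard = R.ncard ^ (Fintype.card ι - 1) - 1 := by
  have hpi : hyperplaneVectorsOver R i₀ =
      Set.univ.pi (Function.update (fun _ => R) i₀ {0}) \ {0} := by
    ext w
    simp only [hyperplaneVectorsOver, Set.mem_ofPred_eq, Set.mem_sdiff, Set.mem_univ_pi,
      Set.mem_singleton_iff, Function.update_apply]
    grind [hR.zero_mem]
  have hcard : (Set.univ.pi (Function.update (fun _ => R) i₀ {0})).ncard =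
      R.ncard ^ (Fintype.card ι - 1) := by
    rw [← Nat.card_coe_set_eq, Nat.card_congr (Equiv.Set.univPi _), Nat.card_pi,
      Fintype.prod_eq_mul_prod_compl i₀]
    have hrest : ∀ i ∈ ({i₀}ᶜ : Finset ι),
        Nat.card (Function.update (fun _ => R) i₀ {0} i) = R.ncard := fun i hi => by
      rw [Function.update_of_ne (by simpa using hi), Nat.card_coe_set_eq]
    rw [Function.update_self, Nat.card_unique, one_mul, Finset.prod_congr rfl hrest,
      Finset.prod_const, Finset.card_compl, Finset.card_singleton]
  have hzero : (0 : ι → L) ∈ Set.univ.pi (Function.update (fun _ => R) i₀ {0}) :=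
    fun i _ => by rcases eq_or_ne i i₀ with rfl | hi <;> simp [*, hR.zero_mem]
  rw [hpi, Set.ncard_sdiff_singleton_of_mem hzero, hcard]

variable (i₀) in
theorem ncard_image_span_pair_mul_ncard_sdiff_zero [Fintype ι] [Finite L]
    (hR : IsSubgroupWithZero R) :
    ((fun w => span L {Pi.single i₀ 1, w}) '' hyperplaneVectorsOver R i₀).ncard *
        (R \ {0}).ncard = R.ncard ^ (Fintype.card ι - 1) - 1 := by
  rw [← ncard_hyperplaneVectorsOver i₀ hR]
  refine Set.ncard_image_mul_of_ncard_fiber_eq (Set.toFinite _) fun w₀ hw₀ => ?_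
  rw [setOf_span_pair_eq_eq_image_smul hR hw₀]
  obtain ⟨j, -, hj⟩ := exists_ne_zero_of_mem_hyperplaneVectorsOver hw₀
  exact Set.InjOn.ncard_image fun c _ c' _ h =>
    mul_right_cancel₀ hj (by simpa using congrFun h j)

end coordinatePoint

end

theorem weight_one_point_line_intersections_general
    (k : ℕ)
    (L : Type) [Field L] [Finite L]
    (K F : Subfield L)
    (R : Set L) (hR : R = {z | ∃ x ∈ K, ∃ y ∈ F, z = x * y})
    (r : ℕ) (hr : r = Nat.card ↥(R \ {0}))
    (B : Set (Submodule L (Fin (k - 1) → L)))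
    (hB : B = {P | ∃ u : Fin (k - 1) → L, u ≠ 0 ∧ (∀ i, u i ∈ R) ∧
      P = Submodule.span L {u}})
    (P : Submodule L (Fin (k - 1) → L))
    (v : Fin (k - 1) → L) (hPv : P = Submodule.span L {v})
    (hwt : Nat.card {i | v i ≠ 0} = 1) :
    (∀ W : Submodule L (Fin (k - 1) → L), Module.finrank L ↥W = 2 → P ≤ W →
      {Q ∈ B | Q ≤ W} = {P} ∨ Nat.card ↥{Q ∈ B | Q ≤ W} = r + 2) ∧
    Nat.card ↥{W : Submodule L (Fin (k - 1) → L) | Module.finrank L ↥W = 2 ∧ P ≤ W ∧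
        2 ≤ Nat.card ↥{Q ∈ B | Q ≤ W}} = ((r + 1) ^ (k - 2) - 1) / r := by
  have hRg : IsSubgroupWithZero R := hR ▸ isSubgroupWithZero_setOf_mul_subfield K F
  obtain ⟨i₀, hv₀, hv_eq⟩ := eq_smul_single_of_card_support_eq_one hwt
  have hPe : P = span L {Pi.single i₀ 1} := by
    rw [hPv, hv_eq, span_singleton_smul_eq hv₀.isUnit]
  change B = pointsOver R _ at hB
  subst hB hPe
  rw [Nat.card_coe_set_eq] at hr
  have hRcard : R.ncard = r + 1 := by rw [hr, Set.ncard_sdiff_singleton_add_one hRg.zero_mem]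
  refine ⟨fun W hW hPW => ?_, ?_⟩
  · refine (setOf_pointsOver_le_eq_singleton_or_exists_eq_span_pair hRg hW hPW).imp_right ?_
    rintro ⟨w, hw, rfl⟩
    rw [Nat.card_coe_set_eq, ncard_setOf_pointsOver_le_span_pair hRg hw, hRcard]
  · have hr₀ : 0 < r :=
      hr ▸ (Set.ncard_pos (Set.toFinite _)).mpr ⟨1, hRg.one_mem, one_ne_zero⟩
    have hcount := ncard_image_span_pair_mul_ncard_sdiff_zero i₀ hRg
    rw [Fintype.card_fin, hRcard, ← hr, Nat.sub_sub] at hcount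
    rw [Nat.card_coe_set_eq, setOf_secant_eq_image_span_pair i₀ hRg]
    exact (Nat.div_eq_of_eq_mul_left hr₀ hcount.symm).symm

/-- Let `q` be a prime power and `k ≥ 3`, `L` the finite field with `q^{k(k-1)}` elements,
`K` its subfield with `q^{k-1}` elements, `F` its subfield with `q^k` elements,
`R = {x·y : x ∈ K, y ∈ F}` and `r = |R ∖ {0}|`.  Let `B(k,q)` be the set of points of
`PG(k-2, q^{k(k-1)})` spanned by a nonzero vector of `R^{k-1}`, and let `P ∈ B(k,q)` be a
point spanned by a vector of Hamming weight 1.  Then every line (`2`-dimensional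
`L`-subspace of `L^{k-1}`) through `P` contains either exactly one point of `B(k,q)`
(namely `P` itself) or exactly `r + 2` points of `B(k,q)`, and the number of secant lines
through `P` equals `((r+1)^{k-2} - 1)/r`. -/
theorem weight_one_point_line_intersections
    (p h q k : ℕ) (hp : p.Prime) (hh : 1 ≤ h) (hq : q = p ^ h) (hk : 3 ≤ k)
    (L : Type) [Field L] [Finite L] (hL : Nat.card L = q ^ (k * (k - 1)))
    (K F : Subfield L) (hK : Nat.card K = q ^ (k - 1)) (hF : Nat.card F = q ^ k)
    (R : Set L) (hR : R = {z | ∃ x ∈ K, ∃ y ∈ F, z = x * y})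
    (r : ℕ) (hr : r = Nat.card ↥(R \ {0}))
    (B : Set (Submodule L (Fin (k - 1) → L)))
    (hB : B = {P | ∃ u : Fin (k - 1) → L, u ≠ 0 ∧ (∀ i, u i ∈ R) ∧
      P = Submodule.span L {u}})
    (P : Submodule L (Fin (k - 1) → L)) (hP : P ∈ B)
    (v : Fin (k - 1) → L) (hv : ∀ i, v i ∈ R) (hPv : P = Submodule.span L {v})
    (hwt : Nat.card {i | v i ≠ 0} = 1) :
    (∀ W : Submodule L (Fin (k - 1) → L), Module.finrank L ↥W = 2 → P ≤ W →
      {Q ∈ B | Q ≤ W} = {P} ∨ Nat.card ↥{Q ∈ B | Q ≤ W} = r + 2) ∧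
    Nat.card ↥{W : Submodule L (Fin (k - 1) → L) | Module.finrank L ↥W = 2 ∧ P ≤ W ∧
        2 ≤ Nat.card ↥{Q ∈ B | Q ≤ W}} = ((r + 1) ^ (k - 2) - 1) / r :=
  weight_one_point_line_intersections_general k L K F R hR r hr B hB P v hPv hwt
end

section
/- Let q be a prime power and k ≥ 2. Then the cardinality of R ∖ {0} = {x·y : x ∈ K ∖ {0}, y ∈ F ∖ {0}} equals (q^{k-1} - 1)(q^k - 1)/(q - 1). -/
/-!
The nonzero elements of `K·F` form the subgroup `K× ⊔ F×` of the cyclic group `L×`. For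
subgroups `H`, `M` of a finite cyclic group, `|H ⊔ M| · |H ⊓ M| = |H| · |M|` and
`|H ⊓ M| = gcd(|H|, |M|)`, and `gcd(q^(k-1) - 1, q^k - 1) = q^gcd(k-1, k) - 1 = q - 1`.
-/

open Pointwise

namespace Subgroup

variable {G : Type*} [Group G]

theorem card_sup_mul_card_inf (H K : Subgroup G) [K.Normal] :
    Nat.card ↥(H ⊔ K) * Nat.card ↥(H ⊓ K) = Nat.card H * Nat.card K := by
  have hH : Nat.card ↥(H ⊓ K) * K.relIndex H = Nat.card H := by
    rw [← relIndex_bot_left, ← inf_relIndex_left H K,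
      relIndex_mul_relIndex _ _ _ bot_le inf_le_left, relIndex_bot_left]
  have hK : Nat.card K * K.relIndex H = Nat.card ↥(H ⊔ K) := by
    rw [← relIndex_sup_right H K, ← relIndex_bot_left, ← relIndex_bot_left,
      relIndex_mul_relIndex _ _ _ bot_le le_sup_right]
  rw [← hH, ← hK]
  ring

end Subgroup

namespace IsCyclic

variable {G : Type*} [CommGroup G] [IsCyclic G] [Finite G]

theorem ker_powMonoidHom_card (H : Subgroup G) :
    (powMonoidHom (Nat.card H) : G →* G).ker = H := by
  symm
  refine Subgroup.eq_of_le_of_card_ge (fun x hx => ?_) ?_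
  · exact orderOf_dvd_iff_pow_eq_one.mp (Subgroup.orderOf_dvd_natCard H hx)
  · rw [card_powMonoidHom_ker, Nat.gcd_eq_right H.card_subgroup_dvd_card]

theorem card_inf (H K : Subgroup G) :
    Nat.card ↥(H ⊓ K) = (Nat.card H).gcd (Nat.card K) := by
  have hker : H ⊓ K = (powMonoidHom ((Nat.card H).gcd (Nat.card K)) : G →* G).ker := by
    conv_lhs => rw [← ker_powMonoidHom_card H, ← ker_powMonoidHom_card K]
    ext x
    simp only [Subgroup.mem_inf, MonoidHom.mem_ker, powMonoidHom_apply]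
    exact pow_gcd_eq_one.symm
  rw [hker, card_powMonoidHom_ker, Nat.gcd_eq_right
    ((Nat.gcd_dvd_left _ _).trans H.card_subgroup_dvd_card)]

end IsCyclic

namespace Subfield

variable {L : Type*} [Field L]

theorem mem_units_toSubmonoid_iff (S : Subfield L) (u : Lˣ) :
    u ∈ S.toSubmonoid.units ↔ (u : L) ∈ S :=
  ⟨fun h => h.1, fun h => ⟨h, by simpa using S.inv_mem h⟩⟩

theorem card_units_toSubmonoid [Finite L] (S : Subfield L) :
    Nat.card S.toSubmonoid.units = Nat.card S - 1 := by
  rw [Nat.card_congr S.toSubmonoid.unitsEquivUnitsType.toEquiv]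
  exact Nat.card_units S

theorem coe_mul_coe_diff_zero (K F : Subfield L) :
    ((K : Set L) * F) \ {0} =
      Units.val '' ((K.toSubmonoid.units ⊔ F.toSubmonoid.units : Subgroup Lˣ) : Set Lˣ) := by
  ext z
  simp only [Set.mem_sdiff, Set.mem_mul, Set.mem_singleton_iff, Set.mem_image, SetLike.mem_coe,
    Subgroup.mem_sup, mem_units_toSubmonoid_iff]
  constructor
  · rintro ⟨⟨x, hx, y, hy, rfl⟩, hxy⟩
    obtain ⟨hx0, hy0⟩ := mul_ne_zero_iff.mp hxy
    exact ⟨Units.mk0 x hx0 * Units.mk0 y hy0, ⟨_, hx, _, hy, rfl⟩, rfl⟩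
  · rintro ⟨_, ⟨v, hv, w, hw, rfl⟩, rfl⟩
    exact ⟨⟨v, hv, w, hw, rfl⟩, Units.ne_zero _⟩

theorem card_coe_mul_coe_diff_zero [Finite L] (K F : Subfield L) :
    Nat.card ↥(((K : Set L) * F) \ {0}) =
      (Nat.card K - 1) * (Nat.card F - 1) / (Nat.card K - 1).gcd (Nat.card F - 1) := by
  have hprod := Subgroup.card_sup_mul_card_inf K.toSubmonoid.units F.toSubmonoid.units
  rw [IsCyclic.card_inf] at hprod
  rw [coe_mul_coe_diff_zero, Nat.card_image_of_injective Units.val_injective,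
    SetLike.coe_sort_coe, ← card_units_toSubmonoid, ← card_units_toSubmonoid]
  refine Nat.eq_div_of_mul_eq_left ?_ hprod
  exact (Nat.gcd_pos_of_pos_left _ Nat.card_pos).ne'

end Subfield

theorem card_R_star_general
    (q k : ℕ) (hk : 2 ≤ k)
    (L : Type) [Field L] [Finite L]
    (K F : Subfield L) (hK : Nat.card K = q ^ (k - 1)) (hF : Nat.card F = q ^ k)
    (R : Set L) (hR : R = {z | ∃ x ∈ K, ∃ y ∈ F, z = x * y}) :
    Nat.card ↥(R \ {0}) = (q ^ (k - 1) - 1) * (q ^ k - 1) / (q - 1) := by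
  have hRKF : R = (K : Set L) * F := by
    ext z
    simp only [hR, Set.mem_ofPred_eq, Set.mem_mul, SetLike.mem_coe, eq_comm]
  have hcop : (k - 1).Coprime k :=
    (Nat.coprime_self_sub_left (by omega)).mpr (Nat.coprime_one_left k)
  have hgcd : (q ^ (k - 1) - 1).gcd (q ^ k - 1) = q - 1 := by
    rw [Nat.pow_sub_one_gcd_pow_sub_one, hcop.gcd_eq_one, pow_one]
  rw [hRKF, Subfield.card_coe_mul_coe_diff_zero, hK, hF, hgcd]

/-- Let `q` be a prime power and `k ≥ 2`, `L` the finite field with `q^{k(k-1)}` elements,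
`K` its subfield with `q^{k-1}` elements and `F` its subfield with `q^k` elements, and
`R = {x·y : x ∈ K, y ∈ F}`.  Then `|R ∖ {0}| = (q^{k-1} - 1)(q^k - 1)/(q - 1)`. -/
theorem card_R_star
    (p h q k : ℕ) (hp : p.Prime) (hh : 1 ≤ h) (hq : q = p ^ h) (hk : 2 ≤ k)
    (L : Type) [Field L] [Finite L] (hL : Nat.card L = q ^ (k * (k - 1)))
    (K F : Subfield L) (hK : Nat.card K = q ^ (k - 1)) (hF : Nat.card F = q ^ k)
    (R : Set L) (hR : R = {z | ∃ x ∈ K, ∃ y ∈ F, z = x * y}) :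
    Nat.card ↥(R \ {0}) = (q ^ (k - 1) - 1) * (q ^ k - 1) / (q - 1) :=
  card_R_star_general q k hk L K F hK hF R hR
end

section
/- Let q be a prime power and k ≥ 2, and let r = |R ∖ {0}|. Then the number of points of PG(k-2, q^{k(k-1)}) spanned by a nonzero vector of R^{k-1}, i.e., the cardinality of B(k,q), equals ((r+1)^{k-1} - 1)/r. -/
/-!
`R ∖ {0} = K^× F^×` is a subgroup of `L^×`, so `R` is stable under multiplication by its nonzero
elements and under division by them. Hence if `u` is a nonzero vector of `R^{k-1}`, a multiple
`c • u` lies in `R^{k-1}` exactly when `c ∈ R` (look at a nonzero coordinate of `u`). The nonzero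
vectors of `R^{k-1}` spanning a given point of `B(k,q)` are therefore the `r` multiples of any one
of them by `R ∖ {0}`, and the `(r+1)^{k-1} - 1` nonzero vectors of `R^{k-1}` fall into `|B(k,q)|`
classes of size `r`.
-/

open Pointwise Submodule

theorem Nat.card_eq_card_range_mul {α β γ : Type*} (f : α → β)
    (e : ∀ a, {x // f x = f a} ≃ γ) : Nat.card α = Nat.card (Set.range f) * Nat.card γ := by
  have fiber (b : Set.range f) : {x // Set.rangeFactorization f x = b} ≃ γ :=
    (Equiv.subtypeEquivRight fun x => by
      rw [← Subtype.coe_inj, Set.rangeFactorization_coe, b.2.choose_spec]).trans (e b.2.choose)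
  rw [← Nat.card_prod, Nat.card_congr <|
    (Equiv.sigmaFiberEquiv (Set.rangeFactorization f)).symm.trans <|
      (Equiv.sigmaCongrRight fiber).trans (Equiv.sigmaEquivProd _ _)]

namespace Subfield

variable {L : Type*} [Field L] (K F : Subfield L)

theorem zero_mem_mul : (0 : L) ∈ (K : Set L) * F :=
  Set.mem_mul.2 ⟨0, K.zero_mem, 0, F.zero_mem, mul_zero 0⟩

theorem one_mem_mul : (1 : L) ∈ (K : Set L) * F :=
  Set.mem_mul.2 ⟨1, K.one_mem, 1, F.one_mem, mul_one 1⟩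

theorem mul_mem_mul_iff {c : L} (hc : c ∈ (K : Set L) * F) (hc0 : c ≠ 0) (l : L) :
    l * c ∈ (K : Set L) * F ↔ l ∈ (K : Set L) * F := by
  obtain ⟨x, hx, y, hy, rfl⟩ := Set.mem_mul.1 hc
  have hx0 : x ≠ 0 := left_ne_zero_of_mul hc0
  have hy0 : y ≠ 0 := right_ne_zero_of_mul hc0
  constructor
  · rintro ⟨x', hx', y', hy', hxy⟩
    refine ⟨x' * x⁻¹, K.mul_mem hx' (K.inv_mem hx), y' * y⁻¹, F.mul_mem hy' (F.inv_mem hy), ?_⟩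
    field_simp
    linear_combination hxy
  · rintro ⟨x', hx', y', hy', rfl⟩
    exact ⟨x' * x, K.mul_mem hx' hx, y' * y, F.mul_mem hy' hy, by ring⟩

end Subfield

section

variable {L : Type*} [Field L] {ι : Type*} {R : Set L}

abbrev NonzeroVecIn (ι : Type*) (R : Set L) : Type _ := {u : ι → L // u ≠ 0 ∧ ∀ i, u i ∈ R}

theorem forall_smul_apply_mem_iff (hR0 : 0 ∈ R) (hR : ∀ c ∈ R, c ≠ 0 → ∀ l, l * c ∈ R ↔ l ∈ R)
    {u : ι → L} (hu0 : u ≠ 0) (hu : ∀ i, u i ∈ R) (c : L) :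
    (∀ i, (c • u) i ∈ R) ↔ c ∈ R := by
  simp only [Pi.smul_apply, smul_eq_mul]
  constructor
  · intro hcu
    obtain ⟨j, hj⟩ := Function.ne_iff.1 hu0
    exact (hR _ (hu j) hj c).1 (hcu j)
  · intro hc i
    by_cases hui : u i = 0
    · simpa [hui] using hR0
    · exact (hR _ (hu i) hui c).2 hc

noncomputable def spanSingletonFiberEquiv (hR0 : 0 ∈ R)
    (hR : ∀ c ∈ R, c ≠ 0 → ∀ l, l * c ∈ R ↔ l ∈ R) (w : NonzeroVecIn ι R) :
    {v : NonzeroVecIn ι R // span L {v.1} = span L {w.1}} ≃ ↥(R \ {0}) :=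
  .symm <| .ofBijective
    (fun c => ⟨⟨(c : L) • w.1, smul_ne_zero c.2.2 w.2.1,
      (forall_smul_apply_mem_iff hR0 hR w.2.1 w.2.2 c).2 c.2.1⟩,
      span_singleton_smul_eq (IsUnit.mk0 _ c.2.2) w.1⟩)
    ⟨fun c d hcd => Subtype.ext <| smul_left_injective L w.2.1 <| congrArg (·.1.1) hcd, by
      rintro ⟨v, hv⟩
      obtain ⟨z, hz⟩ := span_singleton_eq_span_singleton.1 hv.symm
      refine ⟨⟨z, (forall_smul_apply_mem_iff hR0 hR w.2.1 w.2.2 z).1 (hz ▸ v.2.2), z.ne_zero⟩, ?_⟩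
      exact Subtype.ext (Subtype.ext hz)⟩

variable [Finite ι]

theorem card_nonzeroVecIn (hR0 : 0 ∈ R) :
    Nat.card (NonzeroVecIn ι R) = Nat.card R ^ Nat.card ι - 1 := by
  have h0 : (0 : ι → L) ∈ {u : ι → L | ∀ i, u i ∈ R} := fun _ => hR0
  calc Nat.card (NonzeroVecIn ι R)
      = Nat.card ↥({u : ι → L | ∀ i, u i ∈ R} \ {0}) :=
        Nat.card_congr (Equiv.subtypeEquivRight fun _ => and_comm)
    _ = Nat.card {u : ι → L // ∀ i, u i ∈ R} - 1 := by
        rw [Nat.card_coe_set_eq, Set.ncard_sdiff_singleton_of_mem h0]; rfl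
    _ = Nat.card R ^ Nat.card ι - 1 := by
        rw [Nat.card_congr Equiv.subtypePiEquivPi, Nat.card_fun]

theorem card_range_span_singleton_mul_card (hR0 : 0 ∈ R)
    (hR : ∀ c ∈ R, c ≠ 0 → ∀ l, l * c ∈ R ↔ l ∈ R) :
    Nat.card (Set.range fun u : NonzeroVecIn ι R => span L {u.1}) * Nat.card ↥(R \ {0}) =
      Nat.card R ^ Nat.card ι - 1 := by
  rw [← card_nonzeroVecIn hR0, Nat.card_eq_card_range_mul _ (spanSingletonFiberEquiv hR0 hR)]

end

theorem card_Bkq_general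
    (k : ℕ)
    (L : Type) [Field L] [Finite L]
    (K F : Subfield L)
    (R : Set L) (hR : R = {z | ∃ x ∈ K, ∃ y ∈ F, z = x * y})
    (r : ℕ) (hr : r = Nat.card ↥(R \ {0}))
    (B : Set (Submodule L (Fin (k - 1) → L)))
    (hB : B = {P | ∃ u : Fin (k - 1) → L, u ≠ 0 ∧ (∀ i, u i ∈ R) ∧
      P = Submodule.span L {u}}) :
    Nat.card ↥B = ((r + 1) ^ (k - 1) - 1) / r := by
  have hRKF : R = (K : Set L) * F := by
    ext z; simp [hR, Set.mem_mul, eq_comm]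
  have hR0 : 0 ∈ R := hRKF ▸ K.zero_mem_mul F
  have hcardR : Nat.card R = r + 1 := by
    rw [hr, Nat.card_coe_set_eq, Nat.card_coe_set_eq, Set.ncard_sdiff_singleton_add_one hR0]
  have hr0 : 0 < r := by
    rw [hr, Nat.card_pos_iff]
    exact ⟨⟨1, hRKF ▸ K.one_mem_mul F, one_ne_zero⟩, inferInstance⟩
  have hB_range : B = Set.range fun u : NonzeroVecIn (Fin (k - 1)) R => span L {u.1} := by
    ext P; simp [hB, eq_comm, and_assoc]
  have hcount := card_range_span_singleton_mul_card (ι := Fin (k - 1)) hR0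
    fun _ => hRKF ▸ K.mul_mem_mul_iff F
  rw [← hB_range, ← hr, hcardR, Nat.card_fin] at hcount
  exact (Nat.div_eq_of_eq_mul_left hr0 hcount.symm).symm

/-- Let `q` be a prime power and `k ≥ 2`, `L` the finite field with `q^{k(k-1)}` elements,
`K` its subfield with `q^{k-1}` elements and `F` its subfield with `q^k` elements,
`R = {x·y : x ∈ K, y ∈ F}` and `r = |R ∖ {0}|`.  Then `B(k,q)`, the set of points of
`PG(k-2, q^{k(k-1)})` spanned by a nonzero vector of `R^{k-1}`, has cardinality
`((r+1)^{k-1} - 1)/r`. -/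
theorem card_Bkq
    (p h q k : ℕ) (hp : p.Prime) (hh : 1 ≤ h) (hq : q = p ^ h) (hk : 2 ≤ k)
    (L : Type) [Field L] [Finite L] (hL : Nat.card L = q ^ (k * (k - 1)))
    (K F : Subfield L) (hK : Nat.card K = q ^ (k - 1)) (hF : Nat.card F = q ^ k)
    (R : Set L) (hR : R = {z | ∃ x ∈ K, ∃ y ∈ F, z = x * y})
    (r : ℕ) (hr : r = Nat.card ↥(R \ {0}))
    (B : Set (Submodule L (Fin (k - 1) → L)))
    (hB : B = {P | ∃ u : Fin (k - 1) → L, u ≠ 0 ∧ (∀ i, u i ∈ R) ∧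
      P = Submodule.span L {u}}) :
    Nat.card ↥B = ((r + 1) ^ (k - 1) - 1) / r :=
  card_Bkq_general k L K F R hR r hr B hB
end
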